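/- arXiv:2405.13868 — 2 statements merged into one kernel-verified Lean document; each statement's English description precedes it below -/
import Mathlib

section
/- Let G = (V, E) be a finite directed acyclic graph where each node v has a real activation a_v, each edge v→u has a real weight k_{v,u}, and for every non-leaf node u (i.e., a node with in-degree > 0), a_u = ReLU(∑_{v→u∈E} k_{v,u}·a_v), where ReLU(x) = max(x, 0). Suppose every non-leaf node u on any path to a designated root node t satisfies a_u > 0 (so the ReLU is inactive along all relevant paths), and define the gradient ∇_{a_t} a_v as the sum over all directed paths from v to t of the products of edge weights along the path. Then a_t = ∑_{v : in-degree(v)=0} a_v · ∇_{a_t} a_v. -/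
/-! Write `g v` for the path-sum gradient of `t` at `v`. Splitting every path after its first
edge gives `g = k g + δ_t`, where `(k g) v = ∑ u, k v u * g u`. A node `u` with `g u ≠ 0` lies on
a path to `t`, so its ReLU is active and `a u = ∑ v, k v u * a v`. Pairing the two identities,
`∑ v, a v * g v = ∑ (non-leaves u), a u * g u + a t`, and cancelling the non-leaf terms leaves
`a t = ∑ (leaves v), a v * g v`. -/

open Finset

noncomputable section
open scoped Classical

/-- Product of edge weights along a list of vertices. -/
def pathProd {n : ℕ} (k : Fin n → Fin n → ℝ) : List (Fin n) → ℝ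
  | [] => 1
  | [_] => 1
  | i :: j :: rest => k i j * pathProd k (j :: rest)

/-- Vertex sets of potential (increasing) paths from `v` to `t`. -/
def pathFinsets {n : ℕ} (v t : Fin n) : Finset (Finset (Fin n)) :=
  Finset.univ.powerset.filter (fun S => v ∈ S ∧ t ∈ S ∧ ∀ w ∈ S, v ≤ w ∧ w ≤ t)

/-- Sum over all directed paths from `v` to `t` of the product of edge weights. -/
def pathSum {n : ℕ} (k : Fin n → Fin n → ℝ) (v t : Fin n) : ℝ :=
  ∑ S ∈ pathFinsets v t, pathProd k (S.sort (· ≤ ·))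

/-- There exists a genuine directed path (all edges present) from `v` to `t`. -/
def hasPath {n : ℕ} (k : Fin n → Fin n → ℝ) (v t : Fin n) : Prop :=
  ∃ S ∈ pathFinsets v t, (S.sort (· ≤ ·)).Chain' (fun i j => k i j ≠ 0)

/-- Path sum restricted to paths all of whose intermediate nodes are activated. -/
def actPathSum {n : ℕ} (k : Fin n → Fin n → ℝ) (a : Fin n → ℝ) (v t : Fin n) : ℝ :=
  ∑ S ∈ (pathFinsets v t).filter (fun S => ∀ w ∈ S, w ≠ v → w ≠ t → 0 < a w),
    pathProd k (S.sort (· ≤ ·))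

/-- Existence of an activated path (edges present, intermediate nodes activated). -/
def hasActPath {n : ℕ} (k : Fin n → Fin n → ℝ) (a : Fin n → ℝ) (v t : Fin n) : Prop :=
  ∃ S ∈ pathFinsets v t, (S.sort (· ≤ ·)).Chain' (fun i j => k i j ≠ 0) ∧
    ∀ w ∈ S, w ≠ v → w ≠ t → 0 < a w


section

variable {n : ℕ} (k : Fin n → Fin n → ℝ)

lemma mem_pathFinsets {v t : Fin n} {S : Finset (Fin n)} :
    S ∈ pathFinsets v t ↔ v ∈ S ∧ t ∈ S ∧ ∀ w ∈ S, v ≤ w ∧ w ≤ t := by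
  simp [pathFinsets]

lemma pathFinsets_self (t : Fin n) : pathFinsets t t = {{t}} := by
  ext S
  simp only [mem_pathFinsets, mem_singleton, eq_singleton_iff_unique_mem]
  exact ⟨fun ⟨ht, _, hb⟩ => ⟨ht, fun w hw => le_antisymm (hb w hw).2 (hb w hw).1⟩,
    fun ⟨ht, hS⟩ => ⟨ht, ht, fun w hw => by simp [hS w hw]⟩⟩

lemma pathSum_self (t : Fin n) : pathSum k t t = 1 := by
  simp [pathSum, pathFinsets_self, pathProd]

lemma pathSum_eq_zero_of_lt {v t : Fin n} (htv : t < v) : pathSum k v t = 0 := by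
  refine sum_eq_zero fun S hS => ?_
  obtain ⟨hv, -, hb⟩ := mem_pathFinsets.1 hS
  exact absurd (hb v hv).2 htv.not_ge

lemma Finset.sort_insert_of_forall_lt {α : Type*} [LinearOrder α] {s : Finset α} {a : α}
    (h : ∀ b ∈ s, a < b) : (insert a s).sort (· ≤ ·) = a :: s.sort (· ≤ ·) :=
  sort_insert _ (fun b hb => (h b hb).le) fun ha => lt_irrefl a (h a ha)

lemma pathProd_sort_insert {S : Finset (Fin n)} {u v : Fin n} (hu : u ∈ S)
    (hmin : ∀ w ∈ S, u ≤ w) (hvu : v < u) :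
    pathProd k ((insert v S).sort (· ≤ ·)) = k v u * pathProd k (S.sort (· ≤ ·)) := by
  have hsort : S.sort (· ≤ ·) = u :: (S.erase u).sort (· ≤ ·) := by
    conv_lhs => rw [← insert_erase hu]
    exact sort_insert_of_forall_lt fun w hw => lt_of_le_of_ne (hmin w (mem_of_mem_erase hw))
      (ne_of_mem_erase hw).symm
  rw [sort_insert_of_forall_lt fun w hw => hvu.trans_le (hmin w hw), hsort, pathProd]

lemma pathSum_eq_sum_mul_pathSum_of_ne {v t : Fin n} (hvt : v ≠ t) :
    pathSum k v t = ∑ u ∈ univ.filter (v < ·), k v u * pathSum k u t := by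
  simp_rw [pathSum, mul_sum]
  rw [sum_sigma']
  have hmem : ∀ {u S}, (⟨u, S⟩ : Σ _ : Fin n, Finset (Fin n)) ∈
      (univ.filter (v < ·)).sigma (pathFinsets · t) ↔
        v < u ∧ u ∈ S ∧ t ∈ S ∧ ∀ w ∈ S, u ≤ w ∧ w ≤ t := by
    simp [mem_pathFinsets]
  symm
  refine sum_bij (fun p _ => insert v p.2) ?_ ?_ ?_ ?_
  · rintro ⟨u, S⟩ hp
    obtain ⟨hvu, hu, ht, hb⟩ := hmem.1 hp
    refine mem_pathFinsets.2 ⟨mem_insert_self _ _, mem_insert_of_mem ht, fun w hw => ?_⟩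
    rcases mem_insert.1 hw with rfl | hw
    · exact ⟨le_rfl, (hvu.trans_le (hb u hu).2).le⟩
    · exact ⟨(hvu.trans_le (hb w hw).1).le, (hb w hw).2⟩
  · rintro ⟨u₁, S₁⟩ hp₁ ⟨u₂, S₂⟩ hp₂ heq
    obtain ⟨hvu₁, hu₁, -, hb₁⟩ := hmem.1 hp₁
    obtain ⟨hvu₂, hu₂, -, hb₂⟩ := hmem.1 hp₂
    have hS : S₁ = S₂ := by
      rw [← erase_insert fun hv => (hvu₁.trans_le (hb₁ v hv).1).false,
        ← erase_insert fun hv => (hvu₂.trans_le (hb₂ v hv).1).false]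
      exact congrArg (·.erase v) heq
    subst hS
    rw [le_antisymm (hb₁ u₂ hu₂).1 (hb₂ u₁ hu₁).1]
  · intro S hS
    obtain ⟨hv, ht, hb⟩ := mem_pathFinsets.1 hS
    have hne : (S.erase v).Nonempty := ⟨t, mem_erase.2 ⟨hvt.symm, ht⟩⟩
    have hu := mem_erase.1 ((S.erase v).min'_mem hne)
    refine ⟨⟨(S.erase v).min' hne, S.erase v⟩, hmem.2 ⟨?_, min'_mem _ hne, ?_, ?_⟩, insert_erase hv⟩
    · exact lt_of_le_of_ne (hb _ hu.2).1 hu.1.symm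
    · exact mem_erase.2 ⟨hvt.symm, ht⟩
    · exact fun w hw => ⟨min'_le _ w hw, (hb w (mem_of_mem_erase hw)).2⟩
  · rintro ⟨u, S⟩ hp
    obtain ⟨hvu, hu, -, hb⟩ := hmem.1 hp
    exact (pathProd_sort_insert k hu (fun w hw => (hb w hw).1) hvu).symm

lemma pathSum_eq_sum_mul_pathSum_add_ite (htopo : ∀ i j, k i j ≠ 0 → i < j) (v t : Fin n) :
    pathSum k v t = ∑ u, k v u * pathSum k u t + if v = t then 1 else 0 := by
  have hsum : ∑ u ∈ univ.filter (v < ·), k v u * pathSum k u t = ∑ u, k v u * pathSum k u t :=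
    sum_filter_of_ne fun u _ h => htopo v u (left_ne_zero_of_mul h)
  split_ifs with hvt
  · subst hvt
    rw [pathSum_self, ← hsum, sum_eq_zero fun u hu => by
      rw [pathSum_eq_zero_of_lt k (mem_filter.1 hu).2, mul_zero], zero_add]
  · rw [pathSum_eq_sum_mul_pathSum_of_ne k hvt, hsum, add_zero]

lemma isChain_of_pathProd_ne_zero :
    ∀ {l : List (Fin n)}, pathProd k l ≠ 0 → l.IsChain (fun i j => k i j ≠ 0)
  | [], _ => .nil
  | [_], _ => .singleton _
  | _ :: _ :: _, h => by
    rw [pathProd, mul_ne_zero_iff] at h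
    exact .cons_cons h.1 (isChain_of_pathProd_ne_zero h.2)

lemma hasPath_of_pathSum_ne_zero {v t : Fin n} (h : pathSum k v t ≠ 0) : hasPath k v t :=
  let ⟨S, hS, hprod⟩ := exists_ne_zero_of_sum_ne_zero h
  ⟨S, hS, isChain_of_pathProd_ne_zero k hprod⟩

lemma eq_sum_leaves_mul_pathSum_of_linear (a : Fin n → ℝ) (t : Fin n) (htopo : ∀ i j, k i j ≠ 0 → i < j)
    (hlin : ∀ u, (∃ v, k v u ≠ 0) → pathSum k u t ≠ 0 → a u = ∑ v, k v u * a v) :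
    a t = ∑ v ∈ univ.filter (fun v => ∀ u, k u v = 0), a v * pathSum k v t := by
  have hinner : ∀ u, (∑ v, k v u * a v) * pathSum k u t =
      if ¬ ∀ w, k w u = 0 then a u * pathSum k u t else 0 := by
    intro u
    by_cases hleaf : ∀ w, k w u = 0
    · simp [hleaf]
    rw [if_pos hleaf]
    by_cases hg : pathSum k u t = 0
    · simp [hg]
    · rw [hlin u (not_forall.1 hleaf) hg]
  have hpair : ∑ v, a v * pathSum k v t =
      ∑ u ∈ univ.filter (fun u => ¬ ∀ w, k w u = 0), a u * pathSum k u t + a t := by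
    calc ∑ v, a v * pathSum k v t
        = ∑ v, a v * ∑ u, k v u * pathSum k u t + ∑ v, a v * if v = t then 1 else 0 := by
          simp_rw [← sum_add_distrib, ← mul_add, ← pathSum_eq_sum_mul_pathSum_add_ite k htopo]
      _ = ∑ u, (∑ v, k v u * a v) * pathSum k u t + a t := by
          simp_rw [mul_sum, sum_mul, mul_ite, mul_one, mul_zero, sum_ite_eq', mem_univ, if_true]
          rw [sum_comm, add_left_inj]
          exact sum_congr rfl fun _ _ => sum_congr rfl fun _ _ => by ring
      _ = _ := by rw [sum_filter]; simp_rw [hinner]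
  linarith [sum_filter_add_sum_filter_not univ (fun v => ∀ u, k u v = 0)
    (fun v => a v * pathSum k v t)]

end

/-- In a finite DAG (topologically sorted so that edges go from lower
to higher index) with ReLU node semantics, if every non-leaf node lying on some
path to the root  is strictly activated, then the root activation equals the sum
over leaves of activation times the path-sum gradient. -/
theorem relu_graph_leaf_attribution {n : ℕ} (k : Fin n → Fin n → ℝ) (a : Fin n → ℝ)
    (t : Fin n)
    (htopo : ∀ i j, k i j ≠ 0 → i < j)
    (hrec : ∀ u, (∃ v, k v u ≠ 0) → a u = max (∑ v, k v u * a v) 0)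
    (hpos : ∀ u, (∃ v, k v u ≠ 0) → hasPath k u t → 0 < a u) :
    a t = ∑ v ∈ Finset.univ.filter (fun v => ∀ u, k u v = 0), a v * pathSum k v t := by
  refine eq_sum_leaves_mul_pathSum_of_linear k a t htopo fun u hu hg => ?_
  have hau := hpos u hu (hasPath_of_pathSum_ne_zero k hg)
  rw [hrec u hu] at hau ⊢
  exact max_eq_left ((lt_max_iff.1 hau).resolve_right (lt_irrefl 0)).le
end
end

section
/- Let G be a finite DAG with purely linear node semantics a_u = ∑_{v→u} k_{v,u} a_v for non-leaf u and root t. For a threshold τ > 0, hierarchical attribution processes nodes in reverse topological order, setting g_t = 1, g_v = ∑_{v→u} k_{v,u} · g'_u where g'_u = g_u if a_u·g_u ≥ τ and g'_u = 0 otherwise. Let S = {v : in-degree(v) = 0, v receives nonzero truncated gradient}. Then ∑_{v leaf} a_v · g'_v equals the root activation ã_t of the pruned subgraph consisting exactly of nodes with nonzero truncated gradient, where ã_t is computed by the linear recursion on that subgraph with original leaf activations on retained leaves and zero on removed leaves. -/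
open Finset

noncomputable section
open scoped Classical

/-- hierarchical attribution on a purely linear computation graph:
the sum of leaf attribution scores computed with threshold-truncated gradients
equals the root activation of the pruned subgraph consisting of nodes with
nonzero truncated gradient (removed leaves set to zero). -/
theorem hierarchical_attribution_pruned_root {n : ℕ} (k : Fin n → Fin n → ℝ)
    (a : Fin n → ℝ) (t : Fin n) (τ : ℝ) (hτ : 0 < τ)
    (htopo : ∀ i j, k i j ≠ 0 → i < j)
    (hrec : ∀ u, (∃ v, k v u ≠ 0) → a u = ∑ v, k v u * a v)
    (g g' atil : Fin n → ℝ)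
    (hgt : g t = 1)
    (hg : ∀ v, v ≠ t → g v = ∑ u, k v u * g' u)
    (hg' : ∀ v, g' v = if τ ≤ a v * g v then g v else 0)
    (hleaf : ∀ v, (∀ u, k u v = 0) → atil v = if g' v ≠ 0 then a v else 0)
    (hkeep : ∀ u, (∃ v, k v u ≠ 0) → g' u ≠ 0 →
      atil u = ∑ v, if g' v ≠ 0 then k v u * atil v else 0)
    (hdrop : ∀ u, g' u = 0 → atil u = 0) :
    (∑ v ∈ Finset.univ.filter (fun v => ∀ u, k u v = 0), a v * g' v) = atil t := by
  classical
  -- Step 1: g' vanishes strictly above t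
  have key : ∀ m : ℕ, ∀ v : Fin n, n ≤ v.val + m → t < v → g' v = 0 := by
    intro m
    induction m with
    | zero =>
      intro v hv ht
      exact absurd (lt_of_le_of_lt (by simpa using hv) v.isLt) (lt_irrefl _)
    | succ m ih =>
      intro v hv ht
      have hvt : v ≠ t := ne_of_gt ht
      have hgv : g v = 0 := by
        rw [hg v hvt]
        apply Finset.sum_eq_zero
        intro u _
        by_cases hk : k v u = 0
        · simp [hk]
        · have hlt := htopo v u hk
          have hu : g' u = 0 := ih u (by omega) (lt_trans ht hlt)
          simp [hu]
      rw [hg' v, hgv]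
      simp [not_le.mpr hτ]
  have key' : ∀ v : Fin n, t < v → g' v = 0 := fun v hv => key n v (by omega) hv
  -- Step 2: atil v * g' v = atil v * g v
  have hstep2 : ∀ v, atil v * g' v = atil v * g v := by
    intro v
    by_cases h : g' v = 0
    · simp [h, hdrop v h]
    · have hgeq : g' v = g v := by
        rw [hg' v] at h ⊢
        by_cases hc : τ ≤ a v * g v
        · simp [hc]
        · simp [hc] at h
      rw [hgeq]
  set L := Finset.univ.filter (fun v : Fin n => ∀ u, k u v = 0) with hL
  -- leaf terms
  have hleafterm : ∀ v ∈ L, a v * g' v = atil v * g' v := by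
    intro v hv
    rw [hL, Finset.mem_filter] at hv
    by_cases h : g' v = 0
    · simp [h]
    · rw [hleaf v hv.2, if_pos h]
  -- non-leaf terms
  have hnonleaf : ∀ u ∈ Lᶜ, atil u * g' u = (∑ v, k v u * atil v) * g' u := by
    intro u hu
    rw [hL, Finset.mem_compl, Finset.mem_filter] at hu
    have hex : ∃ v, k v u ≠ 0 := by
      by_contra h
      push_neg at h
      exact hu ⟨Finset.mem_univ u, h⟩
    by_cases h : g' u = 0
    · simp [h]
    · congr 1
      rw [hkeep u hex h]
      apply Finset.sum_congr rfl
      intro v _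
      by_cases hv : g' v = 0
      · simp [hv, hdrop v hv]
      · simp [hv]
  -- split the full sum into leaves and non-leaves
  have hsplit : (∑ u, atil u * g' u)
      = (∑ v ∈ L, atil v * g' v) + ∑ u ∈ Lᶜ, (∑ v, k v u * atil v) * g' u := by
    rw [← Finset.sum_add_sum_compl L (fun u => atil u * g' u)]
    congr 1
    exact Finset.sum_congr rfl hnonleaf
  -- the non-leaf part equals the full sum over all u (leaf terms vanish)
  have hLzero : ∀ u ∈ L, (∑ v, k v u * atil v) * g' u = 0 := by
    intro u hu
    rw [hL, Finset.mem_filter] at hu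
    have hz : (∑ v, k v u * atil v) = 0 :=
      Finset.sum_eq_zero (fun v _ => by simp [hu.2 v])
    simp [hz]
  have hswap : (∑ u ∈ Lᶜ, (∑ v, k v u * atil v) * g' u)
      = ∑ v, atil v * (∑ u, k v u * g' u) := by
    have hfull : (∑ u ∈ Lᶜ, (∑ v, k v u * atil v) * g' u)
        = ∑ u, (∑ v, k v u * atil v) * g' u := by
      rw [← Finset.sum_compl_add_sum L (fun u => (∑ v, k v u * atil v) * g' u),
        Finset.sum_eq_zero hLzero, add_zero]
    rw [hfull]
    calc (∑ u, (∑ v, k v u * atil v) * g' u)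
        = ∑ u, ∑ v, atil v * (k v u * g' u) := by
          refine Finset.sum_congr rfl (fun u _ => ?_)
          rw [Finset.sum_mul]
          exact Finset.sum_congr rfl (fun v _ => by ring)
      _ = ∑ v, ∑ u, atil v * (k v u * g' u) := Finset.sum_comm
      _ = ∑ v, atil v * (∑ u, k v u * g' u) := by
          refine Finset.sum_congr rfl (fun v _ => ?_)
          rw [Finset.mul_sum]
  -- inner sums: g v for v ≠ t, 0 for v = t
  have hinner : ∀ v : Fin n, v ≠ t → atil v * (∑ u, k v u * g' u) = atil v * g v := by
    intro v hv; rw [hg v hv]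
  have hinnert : atil t * (∑ u, k t u * g' u) = 0 := by
    have : (∑ u, k t u * g' u) = 0 := by
      apply Finset.sum_eq_zero
      intro u _
      by_cases hk : k t u = 0
      · simp [hk]
      · simp [key' u (htopo t u hk)]
    simp [this]
  -- combine
  have hA : (∑ u, atil u * g' u)
      = (∑ v ∈ L, a v * g' v) + ∑ v ∈ Finset.univ.erase t, atil v * g v := by
    rw [hsplit, hswap, Finset.sum_congr rfl hleafterm |>.symm]
    congr 1
    rw [← Finset.add_sum_erase _ _ (Finset.mem_univ t), hinnert, zero_add]
    exact Finset.sum_congr rfl (fun v hv => hinner v (Finset.ne_of_mem_erase hv))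
  have hB : (∑ u, atil u * g' u)
      = atil t + ∑ v ∈ Finset.univ.erase t, atil v * g v := by
    calc (∑ u, atil u * g' u) = ∑ u, atil u * g u := Finset.sum_congr rfl (fun u _ => hstep2 u)
    _ = atil t * g t + ∑ v ∈ Finset.univ.erase t, atil v * g v :=
        (Finset.add_sum_erase _ _ (Finset.mem_univ t)).symm
    _ = atil t + ∑ v ∈ Finset.univ.erase t, atil v * g v := by rw [hgt, mul_one]
  have := hA.symm.trans hB
  exact add_right_cancel this
end
end
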